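/- arXiv:1710.07748 — 5 statements merged into one kernel-verified Lean document; each statement's English description precedes it below -/
import Mathlib

section
/- Let k be a positive integer and let G be a graph in 𝒢_k. Then every cycle in G of order at least k has order congruent to 0 modulo k. -/
open SimpleGraph

/-- `S` is the vertex set of a (not necessarily induced) path of order `k` in `G`,
i.e. a `k`-path of `G`. -/
def IsPathSupport {V : Type*} (k : ℕ) (G : SimpleGraph V) (S : Set V) : Prop :=
  ∃ (u v : V) (p : G.Walk u v), p.IsPath ∧ p.support.length = k ∧ S = {x | x ∈ p.support}

/-- `X` is a `k`-vertex cover of `G`: every `k`-path of `G` contains a vertex of `X`. -/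
def IsKVertexCover {V : Type*} (k : ℕ) (G : SimpleGraph V) (X : Finset V) : Prop :=
  ∀ S : Set V, IsPathSupport k G S → ∃ x ∈ X, x ∈ S

/-- The `k`-matching number `ν_k(G)`: the maximum number of pairwise disjoint
`k`-paths of `G`. -/
noncomputable def nuK {V : Type*} (k : ℕ) (G : SimpleGraph V) : ℕ :=
  sSup {n | ∃ M : Finset (Set V), (∀ S ∈ M, IsPathSupport k G S) ∧
    (↑M : Set (Set V)).Pairwise Disjoint ∧ M.card = n}

/-- The `k`-vertex cover number `τ_k(G)`: the minimum cardinality of a `k`-vertex cover. -/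
noncomputable def tauK {V : Type*} (k : ℕ) (G : SimpleGraph V) : ℕ :=
  sInf {n | ∃ X : Finset V, IsKVertexCover k G X ∧ X.card = n}

/-- `G` belongs to the class `𝒢_k`: `ν_k(H) = τ_k(H)` for every induced subgraph `H` of `G`. -/
def memGclass {V : Type*} (k : ℕ) (G : SimpleGraph V) : Prop :=
  ∀ s : Set V, nuK k (G.induce s) = tauK k (G.induce s)

/-!
Let `C` be a cycle with `n ≥ k` vertices and `H` the subgraph induced by its vertex set.
Disjoint `k`-paths of `H` use `k` vertices each, so `ν_k(H) k ≤ n`. Conversely, every vertex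
of `C` lies in exactly `k` of the `n` windows of `k` consecutive vertices of `C`, and each
window is a `k`-path; so a `k`-vertex cover `X` of `H` with `|X| k < n` would miss a window,
whence `n ≤ τ_k(H) k`. As `ν_k(H) = τ_k(H)`, `n = ν_k(H) k`.
-/

open Finset Pointwise

lemma exists_forall_add_notMem_of_card_mul_lt {A : Type*} [AddGroup A] [Fintype A]
    [DecidableEq A] {P T : Finset A} (h : #P * #T < Fintype.card A) :
    ∃ i, ∀ t ∈ T, i + t ∉ P := by
  obtain ⟨i, -, hi⟩ := exists_mem_notMem_of_card_lt_card (s := P - T) (t := univ)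
    (by rw [card_univ]; exact card_sub_le.trans_lt h)
  exact ⟨i, fun t ht hP => hi (by simpa using sub_mem_sub hP ht)⟩

section PathsAndMatchings

variable {V : Type*} {k : ℕ} {G : SimpleGraph V}

lemma exists_walk_support_eq_map_range (f : ℕ → V) :
    ∀ m, (∀ t < m, G.Adj (f t) (f (t + 1))) →
      ∃ q : G.Walk (f 0) (f m), q.support = (List.range (m + 1)).map f
  | 0, _ => ⟨Walk.nil, by simp [List.range_succ]⟩
  | m + 1, h => by
    obtain ⟨q, hq⟩ := exists_walk_support_eq_map_range f m fun t ht => h t (by omega)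
    exact ⟨q.concat (h m (by omega)), by rw [Walk.support_concat, hq]; simp [List.range_succ]⟩

lemma isPathSupport_image_Iio {f : ℕ → V} (hk : 0 < k)
    (hadj : ∀ t, t + 1 < k → G.Adj (f t) (f (t + 1))) (hinj : Set.InjOn f (Set.Iio k)) :
    IsPathSupport k G (f '' Set.Iio k) := by
  obtain ⟨m, rfl⟩ : ∃ m, k = m + 1 := ⟨k - 1, by omega⟩
  obtain ⟨q, hq⟩ := exists_walk_support_eq_map_range f m fun t ht => hadj t (by omega)
  refine ⟨_, _, q, Walk.IsPath.mk' ?_, by simp [hq], by ext; simp [hq]⟩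
  rw [hq]
  exact List.Nodup.map_on (fun a ha b hb hab => hinj (by simpa using ha) (by simpa using hb) hab)
    List.nodup_range

lemma IsPathSupport.ncard_eq {S : Set V} (h : IsPathSupport k G S) : S.ncard = k := by
  classical
  obtain ⟨u, v, p, hp, hlen, rfl⟩ := h
  rw [show {x | x ∈ p.support} = (p.support.toFinset : Set V) by ext; simp, Set.ncard_coe_finset,
    List.toFinset_card_of_nodup hp.support_nodup, hlen]

lemma card_mul_le_natCard_of_pairwise_disjoint [Finite V] {M : Finset (Set V)}
    (hM : ∀ S ∈ M, IsPathSupport k G S) (hdisj : (M : Set (Set V)).Pairwise Disjoint) :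
    #M * k ≤ Nat.card V := by
  classical
  have := Fintype.ofFinite V
  have hcard : ∀ S ∈ M, #S.toFinset = k := fun S hS => by
    rw [← Set.ncard_eq_toFinset_card', (hM S hS).ncard_eq]
  calc #M * k = ∑ S ∈ M, #S.toFinset := by rw [sum_congr rfl hcard, sum_const, smul_eq_mul]
    _ = #(M.biUnion fun S => S.toFinset) :=
        (card_biUnion fun S hS T hT hST => Set.disjoint_toFinset.2 (hdisj hS hT hST)).symm
    _ ≤ Nat.card V := (card_le_univ _).trans_eq Nat.card_eq_fintype_card.symm

lemma nuK_mul_le_natCard [Finite V] : nuK k G * k ≤ Nat.card V := by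
  rcases k.eq_zero_or_pos with rfl | hk
  · simp
  refine (Nat.le_div_iff_mul_le hk).1 (csSup_le ⟨0, ∅, by simp, by simp, rfl⟩ ?_)
  rintro _ ⟨M, hM, hdisj, rfl⟩
  exact (Nat.le_div_iff_mul_le hk).2 (card_mul_le_natCard_of_pairwise_disjoint hM hdisj)

lemma exists_isKVertexCover_card_eq_tauK [Finite V] :
    ∃ X, IsKVertexCover k G X ∧ #X = tauK k G := by
  have := Fintype.ofFinite V
  refine Nat.sInf_mem (s := {n | ∃ X, IsKVertexCover k G X ∧ #X = n}) ⟨#univ, univ, ?_, rfl⟩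
  rintro _ ⟨u, _, _, _, _, rfl⟩
  exact ⟨u, mem_univ u, Walk.start_mem_support _⟩

end PathsAndMatchings

namespace SimpleGraph.Walk

variable {V : Type*} {G : SimpleGraph V} {u : V} {c : G.Walk u u} {k : ℕ}

lemma getVert_mod_length (c : G.Walk u u) {j : ℕ} (hj : j ≤ c.length) :
    c.getVert (j % c.length) = c.getVert j := by
  rcases hj.lt_or_eq with hj | rfl
  · rw [Nat.mod_eq_of_lt hj]
  · rw [Nat.mod_self, getVert_zero, getVert_length]

def cycleVert (c : G.Walk u u) (x : ZMod c.length) : {v | v ∈ c.support} :=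
  ⟨c.getVert x.val, c.getVert_mem_support _⟩

lemma coe_cycleVert_natCast (c : G.Walk u u) {j : ℕ} (hj : j ≤ c.length) :
    (c.cycleVert j : V) = c.getVert j := by
  simp [cycleVert, ZMod.val_natCast, c.getVert_mod_length hj]

lemma adj_cycleVert_add_one (c : G.Walk u u) [NeZero c.length] (x : ZMod c.length) :
    (G.induce {v | v ∈ c.support}).Adj (c.cycleVert x) (c.cycleVert (x + 1)) := by
  have hx := x.val_lt
  rw [← ZMod.natCast_zmod_val x, ← Nat.cast_succ, induce_adj, c.coe_cycleVert_natCast hx.le,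
    c.coe_cycleVert_natCast hx]
  exact c.adj_getVert_succ hx

lemma cycleVert_surjective (c : G.Walk u u) : Function.Surjective c.cycleVert := by
  rintro ⟨v, hv⟩
  obtain ⟨j, rfl, hj⟩ := mem_support_iff_exists_getVert.1 hv
  exact ⟨j, Subtype.ext (c.coe_cycleVert_natCast hj)⟩

lemma IsCycle.neZero_length (hc : c.IsCycle) : NeZero c.length :=
  ⟨by have := hc.three_le_length; omega⟩

lemma IsCycle.cycleVert_injective (hc : c.IsCycle) : Function.Injective c.cycleVert := by
  have := hc.neZero_length
  intro x y hxy
  exact ZMod.val_injective _ (hc.getVert_injOn' (Nat.le_sub_one_of_lt x.val_lt)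
    (Nat.le_sub_one_of_lt y.val_lt) (congrArg Subtype.val hxy))

lemma IsCycle.natCard_support (hc : c.IsCycle) : Nat.card {v | v ∈ c.support} = c.length := by
  rw [← Nat.card_eq_of_bijective _ ⟨hc.cycleVert_injective, c.cycleVert_surjective⟩,
    Nat.card_zmod]

lemma IsCycle.isPathSupport_cycleVert_image_Iio (hc : c.IsCycle) (hk : 0 < k)
    (hkn : k ≤ c.length) (i : ZMod c.length) :
    IsPathSupport k (G.induce {v | v ∈ c.support})
      ((fun t : ℕ => c.cycleVert (i + t)) '' Set.Iio k) := by
  have := hc.neZero_length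
  refine isPathSupport_image_Iio hk
    (fun t _ => by simpa [add_assoc] using c.adj_cycleVert_add_one (i + t)) ?_
  intro t₁ h₁ t₂ h₂ h
  have := congrArg ZMod.val (add_left_cancel (hc.cycleVert_injective h))
  rwa [ZMod.val_natCast_of_lt ((Set.mem_Iio.1 h₁).trans_le hkn),
    ZMod.val_natCast_of_lt ((Set.mem_Iio.1 h₂).trans_le hkn)] at this

lemma IsCycle.length_le_card_mul_of_isKVertexCover (hc : c.IsCycle) (hk : 0 < k)
    (hkn : k ≤ c.length) {X : Finset {v | v ∈ c.support}}
    (hX : IsKVertexCover k (G.induce {v | v ∈ c.support}) X) :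
    c.length ≤ #X * k := by
  classical
  have := hc.neZero_length
  by_contra! hlt
  set P := univ.filter fun x => c.cycleVert x ∈ X
  have hP : #P ≤ #X := card_le_card_of_injOn _ (fun x hx => (mem_filter.1 hx).2)
    hc.cycleVert_injective.injOn
  set T : Finset (ZMod c.length) := (range k).image Nat.cast
  obtain ⟨i, hi⟩ := exists_forall_add_notMem_of_card_mul_lt (P := P) (T := T) <|
    calc #P * #T ≤ #X * k := Nat.mul_le_mul hP (card_image_le.trans_eq (card_range k))
      _ < Fintype.card (ZMod c.length) := by rwa [ZMod.card]
  obtain ⟨_, hyX, t, ht, rfl⟩ := hX _ (hc.isPathSupport_cycleVert_image_Iio hk hkn i)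
  exact hi t (mem_image_of_mem _ (mem_range.2 ht)) (mem_filter.2 ⟨mem_univ _, hyX⟩)

end SimpleGraph.Walk

theorem stmt3_general {V : Type*} (k : ℕ) (hk : 0 < k) (G : SimpleGraph V)
    (hG : memGclass k G) (u : V) (c : G.Walk u u) (hc : c.IsCycle)
    (hlen : k ≤ c.length) :
    c.length % k = 0 := by
  set s : Set V := {v | v ∈ c.support}
  have : Finite s := c.support.finite_toSet
  obtain ⟨X, hX, hXcard⟩ := exists_isKVertexCover_card_eq_tauK (k := k) (G := G.induce s)
  have hupper : nuK k (G.induce s) * k ≤ c.length := hc.natCard_support ▸ nuK_mul_le_natCard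
  have hlower : c.length ≤ tauK k (G.induce s) * k :=
    hXcard ▸ hc.length_le_card_mul_of_isKVertexCover hk hlen hX
  rw [hG s] at hupper
  rw [← le_antisymm hupper hlower, Nat.mul_mod_left]

/-- Every cycle of order at least `k` in a graph of `𝒢_k` has order
divisible by `k`. The order of a cycle equals its length. -/
theorem stmt3 {V : Type*} [Fintype V] (k : ℕ) (hk : 0 < k) (G : SimpleGraph V)
    (hG : memGclass k G) (u : V) (c : G.Walk u u) (hc : c.IsCycle)
    (hlen : k ≤ c.length) :
    c.length % k = 0 :=
  stmt3_general k hk G hG u c hc hlen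
end

section
/- Let G be a graph in 𝒢_4, let C be a cycle in G of order at least 4, and let u and v be distinct vertices of C that each have at least one neighbor in G outside of V(C). Then dist_C(u, v) ≡ 0 (mod 2). -/
open SimpleGraph

/-- The cycle graph of order `n`, with vertex set `ZMod n` (for `n ≥ 3`). -/
def cycleG (n : ℕ) : SimpleGraph (ZMod n) :=
  SimpleGraph.fromRel (fun x y => y = x + 1)

lemma zmod_cast_ne' {n : ℕ} {k l : ℕ} (hk : k < n) (hl : l < n) (hkl : k ≠ l) :
    (k : ZMod n) ≠ (l : ZMod n) := by
  intro h
  have : (k : ZMod n).val = (l : ZMod n).val := by rw [h]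
  rw [ZMod.val_cast_of_lt hk, ZMod.val_cast_of_lt hl] at this
  exact hkl this

lemma ne_add_of_ne_zero {n : ℕ} (i c : ZMod n) (hc : c ≠ 0) : i ≠ i + c :=
  fun h => hc (by linear_combination -h)

lemma isPathSupport_of_four {W : Type*} (H : SimpleGraph W) (w0 w1 w2 w3 : W)
    (h01 : H.Adj w0 w1) (h12 : H.Adj w1 w2) (h23 : H.Adj w2 w3)
    (h02 : w0 ≠ w2) (h03 : w0 ≠ w3) (h13 : w1 ≠ w3) :
    IsPathSupport 4 H {x | x = w0 ∨ x = w1 ∨ x = w2 ∨ x = w3} := by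
  refine ⟨w0, w3, .cons h01 (.cons h12 (.cons h23 .nil)), ?_, ?_, ?_⟩
  · rw [SimpleGraph.Walk.isPath_def]
    simp [h01.ne, h12.ne, h23.ne, h02, h03, h13]
  · simp
  · ext x
    simp [or_assoc]

lemma pack_bound {W : Type*} [Fintype W] (H : SimpleGraph W) :
    4 * nuK 4 H ≤ Fintype.card W := by
  classical
  set A := {n | ∃ M : Finset (Set W), (∀ S ∈ M, IsPathSupport 4 H S) ∧
    (↑M : Set (Set W)).Pairwise Disjoint ∧ M.card = n} with hA
  have hbound : ∀ m ∈ A, 4 * m ≤ Fintype.card W := by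
    rintro m ⟨M, hM, hdisj, rfl⟩
    have hfin : ∀ S : M, ∃ F : Finset W, (↑F : Set W) = (S : Set W) ∧ F.card = 4 := by
      rintro ⟨S, hS⟩
      obtain ⟨u, v, p, hp, hlen, rfl⟩ := hM S hS
      refine ⟨p.support.toFinset, ?_, ?_⟩
      · ext x; simp
      · rw [List.toFinset_card_of_nodup hp.support_nodup, hlen]
    choose F hF hFcard using hfin
    have hdisjF : ∀ (x : M), ∀ (y : M), x ≠ y → Disjoint (F x) (F y) := by
      intro x y hxy
      have : Disjoint (x : Set W) (y : Set W) :=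
        hdisj x.2 y.2 (fun h => hxy (Subtype.ext h))
      rw [Finset.disjoint_left]
      intro z hzx hzy
      have h1 : z ∈ (x : Set W) := by rw [← hF x]; exact hzx
      have h2 : z ∈ (y : Set W) := by rw [← hF y]; exact hzy
      exact Set.disjoint_left.mp this h1 h2
    have hcard : (Finset.univ.biUnion (fun x : M => F x)).card = 4 * M.card := by
      rw [Finset.card_biUnion (fun x _ y _ h => hdisjF x y h)]
      simp [hFcard, Finset.card_univ, mul_comm]
    calc 4 * M.card = (Finset.univ.biUnion (fun x : M => F x)).card := hcard.symm
      _ ≤ Fintype.card W := Finset.card_le_card (Finset.subset_univ _)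
  have hne : A.Nonempty := ⟨0, ∅, by simp⟩
  have hbdd : BddAbove A := by
    refine ⟨Fintype.card W, fun m hm => ?_⟩
    have := hbound m hm; omega
  exact hbound _ (Nat.sSup_mem hne hbdd)

lemma exists_cover {W : Type*} [Fintype W] (H : SimpleGraph W) :
    ∃ X : Finset W, IsKVertexCover 4 H X ∧ X.card = tauK 4 H := by
  classical
  have hne : {n | ∃ X : Finset W, IsKVertexCover 4 H X ∧ X.card = n}.Nonempty := by
    refine ⟨(Finset.univ : Finset W).card, Finset.univ, ?_, rfl⟩
    rintro S ⟨u, v, p, hp, hlen, rfl⟩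
    exact ⟨u, Finset.mem_univ u, p.start_mem_support⟩
  obtain ⟨X, hX, hcard⟩ := Nat.sInf_mem hne
  exact ⟨X, hX, hcard⟩

lemma window_count {n : ℕ} (hn : 4 ≤ n) (S : Finset (ZMod n))
    (h : ∀ i : ZMod n, ∃ x ∈ S, x = i ∨ x = i + 1 ∨ x = i + 2 ∨ x = i + 3) :
    n ≤ 4 * S.card ∧ (4 * S.card ≤ n →
      ∀ x ∈ S, (x + 1 ∉ S ∧ x + 2 ∉ S ∧ x + 3 ∉ S ∧ x + 4 ∈ S)) := by
  classical
  haveI : NeZero n := ⟨by omega⟩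
  have hc : ∀ k l : ℕ, k < 4 → l < 4 → k ≠ l → (k : ZMod n) ≠ (l : ZMod n) :=
    fun k l hk hl hkl => zmod_cast_ne' (by omega) (by omega) hkl
  have h1 : (1 : ZMod n) ≠ 0 := by
    have := hc 1 0 (by norm_num) (by norm_num) (by norm_num); simpa using this
  have h2 : (2 : ZMod n) ≠ 0 := by
    have := hc 2 0 (by norm_num) (by norm_num) (by norm_num); simpa using this
  have h3 : (3 : ZMod n) ≠ 0 := by
    have := hc 3 0 (by norm_num) (by norm_num) (by norm_num); simpa using this
  set P : ZMod n → ZMod n → Prop := fun x i => x = i ∨ x = i + 1 ∨ x = i + 2 ∨ x = i + 3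
    with hP
  have hc1 : ∀ i, 1 ≤ (S.filter (fun x => P x i)).card := by
    intro i
    obtain ⟨x, hx, hxi⟩ := h i
    exact Finset.card_pos.mpr ⟨x, Finset.mem_filter.mpr ⟨hx, hxi⟩⟩
  have hwin4 : ∀ x : ZMod n, (Finset.univ.filter (fun i => P x i)).card = 4 := by
    intro x
    have heq : Finset.univ.filter (fun i => P x i) = {x, x - 1, x - 2, x - 3} := by
      ext i
      simp only [Finset.mem_filter, Finset.mem_univ, true_and, Finset.mem_insert,
        Finset.mem_singleton, hP]
      constructor
      · rintro (rfl | h | h | h)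
        · left; rfl
        · right; left; rw [h]; ring
        · right; right; left; rw [h]; ring
        · right; right; right; rw [h]; ring
      · rintro (rfl | rfl | rfl | rfl)
        · left; rfl
        · right; left; ring
        · right; right; left; ring
        · right; right; right; ring
    rw [heq]
    rw [Finset.card_insert_of_notMem, Finset.card_insert_of_notMem,
      Finset.card_insert_of_notMem, Finset.card_singleton]
    · simp only [Finset.mem_singleton]
      intro h; exact h1 (by linear_combination h)
    · simp only [Finset.mem_insert, Finset.mem_singleton]
      push_neg
      exact ⟨fun h => h1 (by linear_combination h), fun h => h2 (by linear_combination h)⟩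
    · simp only [Finset.mem_insert, Finset.mem_singleton]
      push_neg
      refine ⟨fun h => h1 (by linear_combination h), fun h => h2 (by linear_combination h),
        fun h => h3 (by linear_combination h)⟩
  have hsum : ∑ i : ZMod n, (S.filter (fun x => P x i)).card = 4 * S.card := by
    calc ∑ i : ZMod n, (S.filter (fun x => P x i)).card
        = ∑ i : ZMod n, ∑ x ∈ S, if P x i then 1 else 0 := by
          simp only [Finset.card_filter]
      _ = ∑ x ∈ S, ∑ i : ZMod n, if P x i then 1 else 0 := Finset.sum_comm
      _ = ∑ x ∈ S, (Finset.univ.filter (fun i => P x i)).card := by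
          simp only [Finset.card_filter]
      _ = ∑ x ∈ S, 4 := Finset.sum_congr rfl (fun x _ => hwin4 x)
      _ = 4 * S.card := by rw [Finset.sum_const, smul_eq_mul, mul_comm]
  have hcardn : (Finset.univ : Finset (ZMod n)).card = n := by
    simp [ZMod.card]
  have hlow : n ≤ 4 * S.card := by
    calc n = ∑ _i : ZMod n, 1 := by simp [hcardn]
      _ ≤ ∑ i : ZMod n, (S.filter (fun x => P x i)).card :=
          Finset.sum_le_sum (fun i _ => hc1 i)
      _ = 4 * S.card := hsum
  refine ⟨hlow, fun hhi => ?_⟩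
  have hall1 : ∀ i : ZMod n, (S.filter (fun x => P x i)).card = 1 := by
    by_contra hcon
    push_neg at hcon
    obtain ⟨j, hj⟩ := hcon
    have : ∑ _i : ZMod n, 1 < ∑ i : ZMod n, (S.filter (fun x => P x i)).card :=
      Finset.sum_lt_sum (fun i _ => hc1 i)
        ⟨j, Finset.mem_univ j, by have := hc1 j; omega⟩
    rw [hsum] at this
    simp only [Finset.sum_const, smul_eq_mul, mul_one, hcardn] at this
    omega
  intro x hx
  have hcx := hall1 x
  have hxmem : x ∈ S.filter (fun y => P y x) :=
    Finset.mem_filter.mpr ⟨hx, Or.inl rfl⟩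
  have huniq : ∀ y ∈ S.filter (fun y => P y x), y = x := by
    intro y hy
    rcases Finset.card_eq_one.mp hcx with ⟨z, hz⟩
    rw [hz] at hy hxmem
    simp only [Finset.mem_singleton] at hy hxmem
    rw [hy, hxmem]
  have hx1 : x + 1 ∉ S := by
    intro hmem
    have : x + 1 = x := huniq _ (Finset.mem_filter.mpr ⟨hmem, Or.inr (Or.inl rfl)⟩)
    exact h1 (by linear_combination this)
  have hx2 : x + 2 ∉ S := by
    intro hmem
    have : x + 2 = x := huniq _ (Finset.mem_filter.mpr ⟨hmem, Or.inr (Or.inr (Or.inl rfl))⟩)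
    exact h2 (by linear_combination this)
  have hx3 : x + 3 ∉ S := by
    intro hmem
    have : x + 3 = x := huniq _ (Finset.mem_filter.mpr ⟨hmem, Or.inr (Or.inr (Or.inr rfl))⟩)
    exact h3 (by linear_combination this)
  refine ⟨hx1, hx2, hx3, ?_⟩
  obtain ⟨y, hy, hyP⟩ := h (x + 1)
  rcases hyP with rfl | h' | h' | h'
  · exact absurd hy hx1
  · rw [show x + 1 + 1 = x + 2 by ring] at h'; rw [h'] at hy; exact absurd hy hx2
  · rw [show x + 1 + 2 = x + 3 by ring] at h'; rw [h'] at hy; exact absurd hy hx3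
  · rw [show x + 1 + 3 = x + 4 by ring] at h'; rw [h'] at hy; exact hy

lemma spacing_class {n : ℕ} (hn : 4 ≤ n) (h4 : 4 ∣ n) (S : Finset (ZMod n))
    (hsp : ∀ x ∈ S, (x + 1 ∉ S ∧ x + 2 ∉ S ∧ x + 3 ∉ S ∧ x + 4 ∈ S)) :
    ∀ x ∈ S, ∀ y ∈ S,
      ZMod.castHom h4 (ZMod 4) x = ZMod.castHom h4 (ZMod 4) y := by
  haveI : NeZero n := ⟨by omega⟩
  have hcl : ∀ q : ℕ, ∀ y ∈ S, y + ((4 * q : ℕ) : ZMod n) ∈ S := by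
    intro q
    induction q with
    | zero => intro y hy; simpa using hy
    | succ q ih =>
      intro y hy
      have h1 : y + ((4 * (q + 1) : ℕ) : ZMod n) = (y + ((4 * q : ℕ) : ZMod n)) + 4 := by
        push_cast; ring
      rw [h1]
      exact (hsp _ (ih y hy)).2.2.2
  intro x hx y hy
  set m := (x - y).val with hm
  have hxy : x = y + (m : ZMod n) := by
    have : ((x - y).val : ZMod n) = x - y := ZMod.natCast_rightInverse (x - y)
    rw [hm, this]; ring
  have hdm : m = 4 * (m / 4) + m % 4 := (Nat.div_add_mod m 4).symm
  set r := m % 4 with hr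
  have hz : y + ((4 * (m / 4) : ℕ) : ZMod n) ∈ S := hcl (m / 4) y hy
  set z := y + ((4 * (m / 4) : ℕ) : ZMod n) with hzdef
  have hxz : x = z + ((r : ℕ) : ZMod n) := by
    rw [hxy, hzdef]
    rw [show (m : ZMod n) = ((4 * (m / 4) + m % 4 : ℕ) : ZMod n) by rw [← hdm]]
    push_cast
    ring
  have hrlt : r = 0 ∨ r = 1 ∨ r = 2 ∨ r = 3 := by omega
  have hψz : ZMod.castHom h4 (ZMod 4) z = ZMod.castHom h4 (ZMod 4) y := by
    rw [hzdef, map_add, map_natCast]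
    have : ((4 * (m / 4) : ℕ) : ZMod 4) = 0 := by
      rw [show ((4 * (m / 4) : ℕ) : ZMod 4) = ((4 : ℕ) : ZMod 4) * ((m / 4 : ℕ) : ZMod 4)
        by push_cast; ring]
      exact mul_eq_zero_of_left (by decide) _
    rw [this, add_zero]
  rcases hrlt with h0 | h1 | h2 | h3
  · rw [hxz, h0]
    simpa using hψz
  · exfalso
    rw [h1] at hxz
    apply (hsp z hz).1
    rw [show z + 1 = x by rw [hxz]; push_cast; ring]
    exact hx
  · exfalso
    rw [h2] at hxz
    apply (hsp z hz).2.1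
    rw [show z + 2 = x by rw [hxz]; push_cast; ring]
    exact hx
  · exfalso
    rw [h3] at hxz
    apply (hsp z hz).2.2.1
    rw [show z + 3 = x by rw [hxz]; push_cast; ring]
    exact hx

lemma walk_parity {n : ℕ} (h2 : 2 ∣ n) {x y : ZMod n} (p : (cycleG n).Walk x y) :
    (p.length : ZMod 2) = ZMod.castHom h2 (ZMod 2) y - ZMod.castHom h2 (ZMod 2) x := by
  induction p with
  | nil => simp
  | @cons x z y h q ih =>
    have hz : ZMod.castHom h2 (ZMod 2) z = ZMod.castHom h2 (ZMod 2) x + 1 := by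
      rw [cycleG, SimpleGraph.fromRel_adj] at h
      rcases h.2 with h' | h'
      · rw [h', map_add, map_one]
      · have : ZMod.castHom h2 (ZMod 2) x = ZMod.castHom h2 (ZMod 2) z + 1 := by
          rw [h', map_add, map_one]
        rw [this]
        have : (1 : ZMod 2) + 1 = 0 := by decide
        linear_combination -this
    rw [SimpleGraph.Walk.length_cons]
    push_cast
    rw [ih, hz]
    ring



lemma cycle_window_hit {V : Type*} (G : SimpleGraph V) {n : ℕ} (hn : 4 ≤ n)
    (f : ZMod n → V) (hinj : Function.Injective f)
    (hadj : ∀ i : ZMod n, G.Adj (f i) (f (i + 1)))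
    (s : Set V) (hs : ∀ i, f i ∈ s) (X : Finset ↥s)
    (hX : IsKVertexCover 4 (G.induce s) X) (i : ZMod n) :
    ∃ k : ZMod n, (k = i ∨ k = i + 1 ∨ k = i + 2 ∨ k = i + 3) ∧
      (⟨f k, hs k⟩ : ↥s) ∈ X := by
  haveI : NeZero n := ⟨by omega⟩
  have e1 : (1 : ZMod n) ≠ 0 := by
    have := zmod_cast_ne' (show 1 < n by omega) (show 0 < n by omega) one_ne_zero
    simpa using this
  have e2 : (2 : ZMod n) ≠ 0 := by
    have := zmod_cast_ne' (show 2 < n by omega) (show 0 < n by omega) two_ne_zero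
    simpa using this
  have e3 : (3 : ZMod n) ≠ 0 := by
    have := zmod_cast_ne' (show 3 < n by omega) (show 0 < n by omega) three_ne_zero
    simpa using this
  set emb : ZMod n → ↥s := fun k => (⟨f k, hs k⟩ : ↥s) with hemb
  have hembinj : Function.Injective emb := by
    intro x y h
    exact hinj (congrArg Subtype.val h)
  have hadj' : ∀ j : ZMod n, (G.induce s).Adj (emb j) (emb (j + 1)) := by
    intro j
    show G.Adj (f j) (f (j + 1))
    exact hadj j
  have h12' : (G.induce s).Adj (emb (i + 1)) (emb (i + 2)) := by
    have := hadj' (i + 1)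
    rwa [show i + 1 + 1 = i + 2 by ring] at this
  have h23' : (G.induce s).Adj (emb (i + 2)) (emb (i + 3)) := by
    have := hadj' (i + 2)
    rwa [show i + 2 + 1 = i + 3 by ring] at this
  have hP := isPathSupport_of_four (G.induce s) (emb i) (emb (i+1)) (emb (i+2)) (emb (i+3))
    (hadj' i) h12' h23'
    (hembinj.ne (ne_add_of_ne_zero i 2 e2))
    (hembinj.ne (ne_add_of_ne_zero i 3 e3))
    (hembinj.ne (by
      have := ne_add_of_ne_zero (i + 1) 2 e2
      rwa [show i + 1 + 2 = i + 3 by ring] at this))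
  obtain ⟨x, hxX, hxS⟩ := hX _ hP
  rcases hxS with h | h | h | h
  · exact ⟨i, Or.inl rfl, show emb i ∈ X from h ▸ hxX⟩
  · exact ⟨i + 1, Or.inr (Or.inl rfl), show emb (i+1) ∈ X from h ▸ hxX⟩
  · exact ⟨i + 2, Or.inr (Or.inr (Or.inl rfl)), show emb (i+2) ∈ X from h ▸ hxX⟩
  · exact ⟨i + 3, Or.inr (Or.inr (Or.inr rfl)), show emb (i+3) ∈ X from h ▸ hxX⟩

lemma pendant_hit {V : Type*} (G : SimpleGraph V) {n : ℕ}
    (f : ZMod n → V) (hinj : Function.Injective f)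
    (s : Set V) (hs : ∀ i, f i ∈ s) (X : Finset ↥s)
    (hX : IsKVertexCover 4 (G.induce s) X)
    (p₀ p₁ p₂ : ZMod n) (u' : V) (hu's : u' ∈ s) (hu'f : u' ∉ Set.range f)
    (h01 : G.Adj u' (f p₀)) (h12 : G.Adj (f p₀) (f p₁)) (h23 : G.Adj (f p₁) (f p₂))
    (hne02 : p₀ ≠ p₂) :
    (⟨u', hu's⟩ : ↥s) ∈ X ∨
      ∃ k : ZMod n, (k = p₀ ∨ k = p₁ ∨ k = p₂) ∧ (⟨f k, hs k⟩ : ↥s) ∈ X := by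
  have hw0 : (⟨u', hu's⟩ : ↥s) ≠ ⟨f p₁, hs p₁⟩ := by
    intro h
    exact hu'f ⟨p₁, (congrArg Subtype.val h).symm⟩
  have hw0' : (⟨u', hu's⟩ : ↥s) ≠ ⟨f p₂, hs p₂⟩ := by
    intro h
    exact hu'f ⟨p₂, (congrArg Subtype.val h).symm⟩
  have hw13 : (⟨f p₀, hs p₀⟩ : ↥s) ≠ ⟨f p₂, hs p₂⟩ := by
    intro h
    exact hne02 (hinj (congrArg Subtype.val h))
  have hP := isPathSupport_of_four (G.induce s) ⟨u', hu's⟩ ⟨f p₀, hs p₀⟩ ⟨f p₁, hs p₁⟩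
    ⟨f p₂, hs p₂⟩ h01 h12 h23 hw0 hw0' hw13
  obtain ⟨x, hxX, hxS⟩ := hX _ hP
  rcases hxS with h | h | h | h
  · left; exact h ▸ hxX
  · right; exact ⟨p₀, Or.inl rfl, by exact h ▸ hxX⟩
  · right; exact ⟨p₁, Or.inr (Or.inl rfl), by exact h ▸ hxX⟩
  · right; exact ⟨p₂, Or.inr (Or.inr rfl), by exact h ▸ hxX⟩

/-- If `G ∈ 𝒢₄`, `C` is a cycle of order at least `4` in `G` (here given as an
injective homomorphic copy `f` of the cycle of order `n`), and `u = f a` and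
`v = f b` are distinct vertices of `C` having neighbors outside of `V(C)`,
then `dist_C(u,v) ≡ 0 (mod 2)`. -/
theorem stmt6 {V : Type*} [Fintype V] (G : SimpleGraph V) (hG : memGclass 4 G)
    (n : ℕ) (hn : 4 ≤ n) (f : ZMod n → V) (hinj : Function.Injective f)
    (hhom : ∀ a b : ZMod n, (cycleG n).Adj a b → G.Adj (f a) (f b))
    (a b : ZMod n) (hab : a ≠ b)
    (ha : ∃ u', u' ∉ Set.range f ∧ G.Adj (f a) u')
    (hb : ∃ v', v' ∉ Set.range f ∧ G.Adj (f b) v') :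
    (cycleG n).dist a b % 2 = 0 := by
  classical
  obtain ⟨u', hu'r, hu'adj⟩ := ha
  obtain ⟨v', hv'r, hv'adj⟩ := hb
  haveI : NeZero n := ⟨by omega⟩
  have e1 : (1 : ZMod n) ≠ 0 := by
    have := zmod_cast_ne' (show 1 < n by omega) (show 0 < n by omega) one_ne_zero
    simpa using this
  have e2 : (2 : ZMod n) ≠ 0 := by
    have := zmod_cast_ne' (show 2 < n by omega) (show 0 < n by omega) two_ne_zero
    simpa using this
  have hadj : ∀ i : ZMod n, G.Adj (f i) (f (i + 1)) := by
    intro i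
    apply hhom
    rw [cycleG, SimpleGraph.fromRel_adj]
    exact ⟨ne_add_of_ne_zero i 1 e1, Or.inl rfl⟩
  -- Step A : 4 ∣ n
  have hs₁ : ∀ i, f i ∈ Set.range f := fun i => ⟨i, rfl⟩
  letI : Fintype ↥(Set.range f) := (Set.toFinite _).fintype
  have hcard₁ : Fintype.card ↥(Set.range f) ≤ n := by
    rw [← Nat.card_eq_fintype_card]
    have hsurj : Function.Surjective (fun i : ZMod n => (⟨f i, hs₁ i⟩ : ↥(Set.range f))) := by
      rintro ⟨x, i, rfl⟩
      exact ⟨i, rfl⟩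
    calc Nat.card ↥(Set.range f) ≤ Nat.card (ZMod n) :=
          Nat.card_le_card_of_surjective _ hsurj
      _ = n := Nat.card_zmod n
  obtain ⟨X₁, hX₁cov, hX₁card⟩ := exists_cover (G.induce (Set.range f))
  set S₁ : Finset (ZMod n) :=
    Finset.univ.filter (fun i => (⟨f i, hs₁ i⟩ : ↥(Set.range f)) ∈ X₁) with hS₁def
  have hwin₁ : ∀ i : ZMod n, ∃ x ∈ S₁, x = i ∨ x = i + 1 ∨ x = i + 2 ∨ x = i + 3 := by
    intro i
    obtain ⟨k, hk, hkX⟩ := cycle_window_hit G hn f hinj hadj _ hs₁ X₁ hX₁cov i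
    exact ⟨k, Finset.mem_filter.mpr ⟨Finset.mem_univ _, hkX⟩, hk⟩
  have hlow₁ : n ≤ 4 * S₁.card := (window_count hn S₁ hwin₁).1
  have hS₁X : S₁.card ≤ X₁.card := by
    apply Finset.card_le_card_of_injOn (fun i => (⟨f i, hs₁ i⟩ : ↥(Set.range f)))
    · intro i hi
      exact (Finset.mem_filter.mp hi).2
    · intro x _ y _ h
      exact hinj (congrArg Subtype.val h)
  have h4t₁ : 4 * tauK 4 (G.induce (Set.range f)) ≤ n := by
    rw [← hG (Set.range f)]
    exact le_trans (pack_bound _) hcard₁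
  have h4n : 4 ∣ n := ⟨tauK 4 (G.induce (Set.range f)), by omega⟩
  -- Step B : (b-a).val is even
  have hval : (b - a).val % 2 = 0 := by
    by_contra hodd
    have hodd' : (b - a).val % 2 = 1 := by omega
    set s₂ : Set V := Set.range f ∪ {u', v'} with hs₂def
    letI : Fintype ↥s₂ := (Set.toFinite _).fintype
    have hs₂ : ∀ i, f i ∈ s₂ := fun i => Or.inl ⟨i, rfl⟩
    have hu's : u' ∈ s₂ := Set.mem_union_right _ (by simp)
    have hv's : v' ∈ s₂ := Set.mem_union_right _ (by simp)
    obtain ⟨X₂, hX₂cov, hX₂card⟩ := exists_cover (G.induce s₂)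
    set S₂ : Finset (ZMod n) :=
      Finset.univ.filter (fun i => (⟨f i, hs₂ i⟩ : ↥s₂) ∈ X₂) with hS₂def
    have hwin₂ : ∀ i : ZMod n, ∃ x ∈ S₂, x = i ∨ x = i + 1 ∨ x = i + 2 ∨ x = i + 3 := by
      intro i
      obtain ⟨k, hk, hkX⟩ := cycle_window_hit G hn f hinj hadj _ hs₂ X₂ hX₂cov i
      exact ⟨k, Finset.mem_filter.mpr ⟨Finset.mem_univ _, hkX⟩, hk⟩
    have hlow₂ : n ≤ 4 * S₂.card := (window_count hn S₂ hwin₂).1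
    have hS₂X : S₂.card ≤ X₂.card := by
      apply Finset.card_le_card_of_injOn (fun i => (⟨f i, hs₂ i⟩ : ↥s₂))
      · intro i hi
        exact (Finset.mem_filter.mp hi).2
      · intro x _ y _ h
        exact hinj (congrArg Subtype.val h)
    have hcard₂ : Fintype.card ↥s₂ ≤ n + 2 := by
      have h1 : Fintype.card ↥s₂ = s₂.toFinset.card := (Set.toFinset_card s₂).symm
      have hsub : s₂.toFinset ⊆ (Set.range f).toFinset ∪ {u', v'} := by
        intro x hx
        rw [Set.mem_toFinset] at hx
        rcases hx with hx | hx
        · exact Finset.mem_union_left _ (Set.mem_toFinset.mpr hx)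
        · rcases hx with rfl | rfl
          · exact Finset.mem_union_right _ (by simp)
          · exact Finset.mem_union_right _ (by simp)
      have h2 : (Set.range f).toFinset.card = Fintype.card ↥(Set.range f) :=
        Set.toFinset_card _
      calc Fintype.card ↥s₂ = s₂.toFinset.card := h1
        _ ≤ ((Set.range f).toFinset ∪ {u', v'}).card := Finset.card_le_card hsub
        _ ≤ (Set.range f).toFinset.card + ({u', v'} : Finset V).card :=
            Finset.card_union_le _ _
        _ ≤ n + 2 := by
            have h3 : ({u', v'} : Finset V).card ≤ 2 :=
              le_trans (Finset.card_insert_le _ _) (by simp)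
            omega
    have h4t₂ : 4 * tauK 4 (G.induce s₂) ≤ n + 2 := by
      rw [← hG s₂]
      exact le_trans (pack_bound _) hcard₂
    obtain ⟨K, hK⟩ := id h4n
    have h4t₂' : 4 * tauK 4 (G.induce s₂) ≤ n := by omega
    have heqS : 4 * S₂.card ≤ n := by omega
    have hsp := (window_count hn S₂ hwin₂).2 heqS
    -- X₂ is exactly the image of S₂
    have himg : S₂.image (fun i => (⟨f i, hs₂ i⟩ : ↥s₂)) ⊆ X₂ := by
      intro x hx
      obtain ⟨i, hi, rfl⟩ := Finset.mem_image.mp hx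
      exact (Finset.mem_filter.mp hi).2
    have hcardimg : (S₂.image (fun i => (⟨f i, hs₂ i⟩ : ↥s₂))).card = S₂.card :=
      Finset.card_image_of_injOn (fun x _ y _ h => hinj (congrArg Subtype.val h))
    have hXeq : S₂.image (fun i => (⟨f i, hs₂ i⟩ : ↥s₂)) = X₂ :=
      Finset.eq_of_subset_of_card_le himg (by omega)
    have hu'X : (⟨u', hu's⟩ : ↥s₂) ∉ X₂ := by
      intro h
      rw [← hXeq] at h
      obtain ⟨i, _, hi⟩ := Finset.mem_image.mp h
      exact hu'r ⟨i, congrArg Subtype.val hi⟩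
    have hv'X : (⟨v', hv's⟩ : ↥s₂) ∉ X₂ := by
      intro h
      rw [← hXeq] at h
      obtain ⟨i, _, hi⟩ := Finset.mem_image.mp h
      exact hv'r ⟨i, congrArg Subtype.val hi⟩
    -- pendant paths
    have hadjm : ∀ i : ZMod n, G.Adj (f i) (f (i - 1)) := by
      intro i
      have := hadj (i - 1)
      rw [sub_add_cancel] at this
      exact this.symm
    have ph1 := pendant_hit G f hinj s₂ hs₂ X₂ hX₂cov a (a+1) (a+2) u' hu's hu'r
      hu'adj.symm (hadj a)
      (by have := hadj (a+1); rwa [show a+1+1 = a+2 by ring] at this)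
      (ne_add_of_ne_zero a 2 e2)
    have ph2 := pendant_hit G f hinj s₂ hs₂ X₂ hX₂cov a (a-1) (a-2) u' hu's hu'r
      hu'adj.symm (hadjm a)
      (by have := hadjm (a-1); rwa [show a-1-1 = a-2 by ring] at this)
      (fun h => e2 (by linear_combination h))
    have ph3 := pendant_hit G f hinj s₂ hs₂ X₂ hX₂cov b (b+1) (b+2) v' hv's hv'r
      hv'adj.symm (hadj b)
      (by have := hadj (b+1); rwa [show b+1+1 = b+2 by ring] at this)
      (ne_add_of_ne_zero b 2 e2)
    have ph4 := pendant_hit G f hinj s₂ hs₂ X₂ hX₂cov b (b-1) (b-2) v' hv's hv'r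
      hv'adj.symm (hadjm b)
      (by have := hadjm (b-1); rwa [show b-1-1 = b-2 by ring] at this)
      (fun h => e2 (by linear_combination h))
    obtain ⟨k₁, hk₁d, hk₁X⟩ := ph1.resolve_left hu'X
    obtain ⟨k₂, hk₂d, hk₂X⟩ := ph2.resolve_left hu'X
    obtain ⟨k₃, hk₃d, hk₃X⟩ := ph3.resolve_left hv'X
    obtain ⟨k₄, hk₄d, hk₄X⟩ := ph4.resolve_left hv'X
    have hk₁S : k₁ ∈ S₂ := Finset.mem_filter.mpr ⟨Finset.mem_univ _, hk₁X⟩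
    have hk₂S : k₂ ∈ S₂ := Finset.mem_filter.mpr ⟨Finset.mem_univ _, hk₂X⟩
    have hk₃S : k₃ ∈ S₂ := Finset.mem_filter.mpr ⟨Finset.mem_univ _, hk₃X⟩
    have hk₄S : k₄ ∈ S₂ := Finset.mem_filter.mpr ⟨Finset.mem_univ _, hk₄X⟩
    have hcls := spacing_class hn h4n S₂ hsp
    set ψ := ZMod.castHom h4n (ZMod 4) with hψdef
    have hρ12 : ψ k₁ = ψ k₂ := hcls k₁ hk₁S k₂ hk₂S
    have hρ34 : ψ k₃ = ψ k₄ := hcls k₃ hk₃S k₄ hk₄S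
    have hρ13 : ψ k₁ = ψ k₃ := hcls k₁ hk₁S k₃ hk₃S
    have hα : ψ k₁ = ψ a ∨ ψ k₁ = ψ a + 1 ∨ ψ k₁ = ψ a + 2 := by
      rcases hk₁d with rfl | rfl | rfl
      · exact Or.inl rfl
      · right; left; rw [map_add, map_one]
      · right; right; rw [map_add, map_ofNat]
    have hβ : ψ k₂ = ψ a ∨ ψ k₂ = ψ a - 1 ∨ ψ k₂ = ψ a - 2 := by
      rcases hk₂d with rfl | rfl | rfl
      · exact Or.inl rfl
      · right; left; rw [map_sub, map_one]
      · right; right; rw [map_sub, map_ofNat]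
    have hγ : ψ k₃ = ψ b ∨ ψ k₃ = ψ b + 1 ∨ ψ k₃ = ψ b + 2 := by
      rcases hk₃d with rfl | rfl | rfl
      · exact Or.inl rfl
      · right; left; rw [map_add, map_one]
      · right; right; rw [map_add, map_ofNat]
    have hδ : ψ k₄ = ψ b ∨ ψ k₄ = ψ b - 1 ∨ ψ k₄ = ψ b - 2 := by
      rcases hk₄d with rfl | rfl | rfl
      · exact Or.inl rfl
      · right; left; rw [map_sub, map_one]
      · right; right; rw [map_sub, map_ofNat]
    have key : ∀ (pa pb x y z w : ZMod 4),
        (x = pa ∨ x = pa + 1 ∨ x = pa + 2) → (y = pa ∨ y = pa - 1 ∨ y = pa - 2) →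
        (z = pb ∨ z = pb + 1 ∨ z = pb + 2) → (w = pb ∨ w = pb - 1 ∨ w = pb - 2) →
        x = y → z = w → x = z → (pb - pa = 0 ∨ pb - pa = 2) := by decide
    have hbma : ψ b - ψ a = 0 ∨ ψ b - ψ a = 2 :=
      key (ψ a) (ψ b) (ψ k₁) (ψ k₂) (ψ k₃) (ψ k₄) hα hβ hγ hδ hρ12 hρ34 hρ13
    have hcast : ψ (b - a) = (((b - a).val : ℕ) : ZMod 4) := by
      conv_lhs => rw [show b - a = (((b-a).val : ℕ) : ZMod n) from
        (ZMod.natCast_rightInverse (b-a)).symm]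
      rw [map_natCast]
    have hsubψ : ψ (b - a) = ψ b - ψ a := map_sub ψ b a
    have hmod : (((b - a).val : ℕ) : ZMod 4) = (((b - a).val % 4 : ℕ) : ZMod 4) :=
      (ZMod.natCast_mod _ 4).symm
    have hd4 : (b - a).val % 4 = 1 ∨ (b - a).val % 4 = 3 := by omega
    rcases hd4 with h | h
    · rw [h] at hmod
      rw [hcast, hmod] at hsubψ
      rcases hbma with hh | hh <;> rw [← hsubψ] at hh <;> revert hh <;> decide
    · rw [h] at hmod
      rw [hcast, hmod] at hsubψ
      rcases hbma with hh | hh <;> rw [← hsubψ] at hh <;> revert hh <;> decide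
  -- Step C : conclude for dist
  have h2n : 2 ∣ n := dvd_trans (by norm_num) h4n
  have hφval : (((b - a).val : ℕ) : ZMod 2) = 0 := by
    rw [ZMod.natCast_eq_zero_iff]
    omega
  by_cases hr : (cycleG n).Reachable a b
  · obtain ⟨p, hp⟩ := hr.exists_walk_length_eq_dist
    have hpar := walk_parity h2n p
    rw [hp] at hpar
    have hz : (((cycleG n).dist a b : ℕ) : ZMod 2) = 0 := by
      rw [hpar, ← map_sub]
      rw [show b - a = (((b-a).val : ℕ) : ZMod n) from
        (ZMod.natCast_rightInverse (b-a)).symm, map_natCast]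
      exact hφval
    have := (ZMod.natCast_eq_zero_iff _ 2).mp hz
    omega
  · have hz : (cycleG n).dist a b = 0 := by
      rw [SimpleGraph.dist_eq_zero_iff_eq_or_not_reachable]
      exact Or.inr hr
    omega
end

section
/- If a graph G contains six distinct vertices a, b, c, a', b', c' such that ab, bc, ca, aa', bb', cc' are all edges of G (i.e., G contains as a subgraph a triangle with a pendant vertex attached to each of its three vertices), then G does not belong to 𝒢_4. -/
open SimpleGraph

lemma ncard_of_pathSupport {V : Type*} {k : ℕ} {G : SimpleGraph V} {S : Set V}
    (h : IsPathSupport k G S) : S.ncard = k := by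
  classical
  obtain ⟨u, v, p, hp, hlen, rfl⟩ := h
  have : {x | x ∈ p.support} = ↑p.support.toFinset := by ext z; simp
  rw [this, Set.ncard_coe_finset, List.toFinset_card_of_nodup hp.support_nodup, hlen]

/-- If `G` contains a triangle `abc` with a pendant vertex attached to each of its
three vertices (six distinct vertices in total), then `G ∉ 𝒢₄`. -/
theorem stmt12 {V : Type*} [Fintype V] (G : SimpleGraph V)
    (a b c a' b' c' : V) (hnd : ([a, b, c, a', b', c'] : List V).Nodup)
    (hab : G.Adj a b) (hbc : G.Adj b c) (hca : G.Adj c a)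
    (haa : G.Adj a a') (hbb : G.Adj b b') (hcc : G.Adj c c') :
    ¬ memGclass 4 G := by
  classical
  simp only [List.nodup_cons, List.mem_cons, List.not_mem_nil, or_false, List.mem_singleton,
    List.nodup_nil, and_true, not_or, List.mem_singleton] at hnd
  obtain ⟨⟨hab', hac', haa'', hab'', hac''⟩, ⟨hbc', hba', hbb'', hbc''⟩,
    ⟨hca'', hcb'', hcc''⟩, ⟨ha'b', ha'c'⟩, hb'c', -⟩ := hnd
  intro hmem
  set s : Set V := {a, b, c, a', b', c'} with hs
  have hma : a ∈ s := by simp [hs]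
  have hmb : b ∈ s := by simp [hs]
  have hmc : c ∈ s := by simp [hs]
  have hma' : a' ∈ s := by simp [hs]
  have hmb' : b' ∈ s := by simp [hs]
  have hmc' : c' ∈ s := by simp [hs]
  set H := G.induce s with hH
  let A : s := ⟨a, hma⟩
  let B : s := ⟨b, hmb⟩
  let C : s := ⟨c, hmc⟩
  let A' : s := ⟨a', hma'⟩
  let B' : s := ⟨b', hmb'⟩
  let C' : s := ⟨c', hmc'⟩
  -- three 4-paths
  have hAA' : H.Adj A' A := haa.symm
  have hAB : H.Adj A B := hab
  have hBB' : H.Adj B B' := hbb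
  have hBB'2 : H.Adj B' B := hbb.symm
  have hBC : H.Adj B C := hbc
  have hCC' : H.Adj C C' := hcc
  have hAC : H.Adj A C := hca.symm
  let p1 : H.Walk A' B' := Walk.cons hAA' (Walk.cons hAB (Walk.cons hBB' Walk.nil))
  let p2 : H.Walk B' C' := Walk.cons hBB'2 (Walk.cons hBC (Walk.cons hCC' Walk.nil))
  let p3 : H.Walk A' C' := Walk.cons hAA' (Walk.cons hAC (Walk.cons hCC' Walk.nil))
  have hp1 : p1.IsPath := by
    simp [p1, Walk.isPath_def, A, B, A', B', Subtype.ext_iff]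
    tauto
  have hp2 : p2.IsPath := by
    simp [p2, Walk.isPath_def, B, C, B', C', Subtype.ext_iff]
    tauto
  have hp3 : p3.IsPath := by
    simp [p3, Walk.isPath_def, A, C, A', C', Subtype.ext_iff]
    tauto
  have hS1 : IsPathSupport 4 H {x | x ∈ p1.support} := ⟨A', B', p1, hp1, by simp [p1], rfl⟩
  have hS2 : IsPathSupport 4 H {x | x ∈ p2.support} := ⟨B', C', p2, hp2, by simp [p2], rfl⟩
  have hS3 : IsPathSupport 4 H {x | x ∈ p3.support} := ⟨A', C', p3, hp3, by simp [p3], rfl⟩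
  -- cardinality of s
  have hcard : Set.ncard (Set.univ : Set s) ≤ 6 := by
    rw [Set.ncard_univ, Nat.card_coe_set_eq, hs]
    have t1 := Set.ncard_insert_le a ({b, c, a', b', c'} : Set V)
    have t2 := Set.ncard_insert_le b ({c, a', b', c'} : Set V)
    have t3 := Set.ncard_insert_le c ({a', b', c'} : Set V)
    have t4 := Set.ncard_insert_le a' ({b', c'} : Set V)
    have t5 := Set.ncard_insert_le b' ({c'} : Set V)
    have t6 : Set.ncard ({c'} : Set V) = 1 := Set.ncard_singleton _
    omega
  -- nuK = 1
  have hnu : nuK 4 H = 1 := by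
    have hbound : ∀ n ∈ {n | ∃ M : Finset (Set s), (∀ S ∈ M, IsPathSupport 4 H S) ∧
        (↑M : Set (Set s)).Pairwise Disjoint ∧ M.card = n}, n ≤ 1 := fun n hn => by
            obtain ⟨M, hM, hdisj, rfl⟩ := hn
            by_contra hlt
            push_neg at hlt
            obtain ⟨S, hSM, T, hTM, hST⟩ := Finset.one_lt_card.mp hlt
            have hdST : Disjoint S T := hdisj hSM hTM hST
            have h1 : S.ncard = 4 := ncard_of_pathSupport (hM S hSM)
            have h2 : T.ncard = 4 := ncard_of_pathSupport (hM T hTM)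
            have h8 : (S ∪ T).ncard = 8 := by
              rw [Set.ncard_union_eq hdST (Set.toFinite _) (Set.toFinite _), h1, h2]
            have hle : (S ∪ T).ncard ≤ Set.ncard (Set.univ : Set s) :=
              Set.ncard_le_ncard (Set.subset_univ _) (Set.toFinite _)
            omega
    apply le_antisymm
    · exact csSup_le ⟨0, ∅, by simp⟩ hbound
    · exact le_csSup ⟨1, fun n hn => hbound n hn⟩
        ⟨{({x | x ∈ p1.support} : Set s)}, by simpa using hS1, by simp, by simp⟩
  -- tauK ≥ 2
  have htau : 2 ≤ tauK 4 H := by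
    have hne : ∃ n, n ∈ {n | ∃ X : Finset s, IsKVertexCover 4 H X ∧ X.card = n} := by
      refine ⟨(Finset.univ : Finset s).card, Finset.univ, ?_, rfl⟩
      rintro S ⟨u, v, p, hp, hlen, rfl⟩
      exact ⟨u, Finset.mem_univ u, p.start_mem_support⟩
    obtain ⟨X, hX, hXcard⟩ := Nat.sInf_mem hne
    rw [tauK, ← hXcard]
    by_contra hlt
    push_neg at hlt
    have hX1 : X.card ≤ 1 := by omega
    obtain ⟨x1, hx1X, hx1⟩ := hX _ hS1
    obtain ⟨x2, hx2X, hx2⟩ := hX _ hS2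
    obtain ⟨x3, hx3X, hx3⟩ := hX _ hS3
    have e12 : x1 = x2 := Finset.card_le_one.mp hX1 _ hx1X _ hx2X
    have e13 : x1 = x3 := Finset.card_le_one.mp hX1 _ hx1X _ hx3X
    subst e12; subst e13
    simp only [Set.mem_setOf_eq, p1, p2, p3, Walk.support_cons, Walk.support_nil,
      List.mem_cons, List.not_mem_nil, or_false, List.mem_singleton] at hx1 hx2 hx3
    have hv1 : (x1 : V) = a' ∨ (x1 : V) = a ∨ (x1 : V) = b ∨ (x1 : V) = b' := by
      rcases hx1 with h|h|h|h
      · exact Or.inl (congrArg Subtype.val h)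
      · exact Or.inr (Or.inl (congrArg Subtype.val h))
      · exact Or.inr (Or.inr (Or.inl (congrArg Subtype.val h)))
      · exact Or.inr (Or.inr (Or.inr (congrArg Subtype.val h)))
    have hv2 : (x1 : V) = b' ∨ (x1 : V) = b ∨ (x1 : V) = c ∨ (x1 : V) = c' := by
      rcases hx2 with h|h|h|h
      · exact Or.inl (congrArg Subtype.val h)
      · exact Or.inr (Or.inl (congrArg Subtype.val h))
      · exact Or.inr (Or.inr (Or.inl (congrArg Subtype.val h)))
      · exact Or.inr (Or.inr (Or.inr (congrArg Subtype.val h)))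
    have hv3 : (x1 : V) = a' ∨ (x1 : V) = a ∨ (x1 : V) = c ∨ (x1 : V) = c' := by
      rcases hx3 with h|h|h|h
      · exact Or.inl (congrArg Subtype.val h)
      · exact Or.inr (Or.inl (congrArg Subtype.val h))
      · exact Or.inr (Or.inr (Or.inl (congrArg Subtype.val h)))
      · exact Or.inr (Or.inr (Or.inr (congrArg Subtype.val h)))
    rcases hv1 with h|h|h|h
    · rw [h] at hv2
      rcases hv2 with h2|h2|h2|h2
      exacts [ha'b' h2, hba' h2.symm, hca'' h2.symm, ha'c' h2]
    · rw [h] at hv2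
      rcases hv2 with h2|h2|h2|h2
      exacts [hab'' h2, hab' h2, hac' h2, hac'' h2]
    · rw [h] at hv3
      rcases hv3 with h3|h3|h3|h3
      exacts [hba' h3, hab' h3.symm, hbc' h3, hbc'' h3]
    · rw [h] at hv3
      rcases hv3 with h3|h3|h3|h3
      exacts [ha'b' h3.symm, hab'' h3.symm, hcb'' h3.symm, hb'c' h3]
  have := hmem s
  rw [← hH, hnu] at this
  omega
end

section
/- If a graph G contains seven distinct vertices a, b, c, a_1, a_2, b_1, b_2 such that ab, bc, ca, aa_1, a_1a_2, bb_1, b_1b_2 are all edges of G (i.e., G contains as a subgraph a triangle with a path of length 2 attached to each of two of its vertices), then G does not belong to 𝒢_4. -/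
open SimpleGraph

lemma pathSupport4 {V : Type*} (G : SimpleGraph V) (s : Set V) (x y z w : V)
    (hx : x ∈ s) (hy : y ∈ s) (hz : z ∈ s) (hw : w ∈ s)
    (h1 : G.Adj x y) (h2 : G.Adj y z) (h3 : G.Adj z w)
    (hxz : x ≠ z) (hxw : x ≠ w) (hyw : y ≠ w) :
    IsPathSupport 4 (G.induce s)
      ({⟨x,hx⟩, ⟨y,hy⟩, ⟨z,hz⟩, ⟨w,hw⟩} : Set s) := by
  have e1 : (G.induce s).Adj ⟨x,hx⟩ ⟨y,hy⟩ := h1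
  have e2 : (G.induce s).Adj ⟨y,hy⟩ ⟨z,hz⟩ := h2
  have e3 : (G.induce s).Adj ⟨z,hz⟩ ⟨w,hw⟩ := h3
  refine ⟨⟨x,hx⟩, ⟨w,hw⟩, Walk.cons e1 (Walk.cons e2 (Walk.cons e3 Walk.nil)), ?_, ?_, ?_⟩
  · rw [Walk.isPath_def]
    simp [Subtype.ext_iff, h1.ne, h2.ne, h3.ne, hxz, hxw, hyw]
  · simp
  · ext u
    simp [or_assoc]

lemma pathSupport_ncard {V : Type*} {k : ℕ} {G : SimpleGraph V} {S : Set V}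
    (h : IsPathSupport k G S) : S.Finite ∧ S.ncard = k := by
  classical
  obtain ⟨u, v, p, hp, hl, hS⟩ := h
  have : S = ↑p.support.toFinset := by
    rw [hS]; ext x; simp
  rw [this, Set.ncard_coe_finset]
  exact ⟨(p.support.toFinset : Set V).toFinite,
    by rw [List.toFinset_card_of_nodup hp.support_nodup, hl]⟩

/-- If `G` contains a triangle `abc` with a path of length `2` attached to each of
the two vertices `a` and `b` (seven distinct vertices in total), then `G ∉ 𝒢₄`. -/
theorem stmt13 {V : Type*} [Fintype V] (G : SimpleGraph V)
    (a b c a1 a2 b1 b2 : V) (hnd : ([a, b, c, a1, a2, b1, b2] : List V).Nodup)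
    (hab : G.Adj a b) (hbc : G.Adj b c) (hca : G.Adj c a)
    (ha1 : G.Adj a a1) (ha2 : G.Adj a1 a2)
    (hb1 : G.Adj b b1) (hb2 : G.Adj b1 b2) :
    ¬ memGclass 4 G := by
  classical
  intro hmem
  have hnd0 := hnd
  simp at hnd
  obtain ⟨⟨nab, nac, naa1, naa2, nab1, nab2⟩, ⟨nbc, nba1, nba2, nbb1, nbb2⟩,
    ⟨nca1, nca2, ncb1, ncb2⟩, ⟨na12, na1b1, na1b2⟩, ⟨na2b1, na2b2⟩, nb12⟩ := hnd
  set s : Set V := {a, b, c, a1, a2, b1, b2} with hs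
  have ma : a ∈ s := by simp [hs]
  have mb : b ∈ s := by simp [hs]
  have mc : c ∈ s := by simp [hs]
  have ma1 : a1 ∈ s := by simp [hs]
  have ma2 : a2 ∈ s := by simp [hs]
  have mb1 : b1 ∈ s := by simp [hs]
  have mb2 : b2 ∈ s := by simp [hs]
  -- the three 4-paths
  have hP1 : IsPathSupport 4 (G.induce s)
      ({⟨a2,ma2⟩, ⟨a1,ma1⟩, ⟨a,ma⟩, ⟨c,mc⟩} : Set s) :=
    pathSupport4 G s a2 a1 a c ma2 ma1 ma mc ha2.symm ha1.symm hca.symm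
      (Ne.symm naa2) (Ne.symm nca2) (Ne.symm nca1)
  have hP2 : IsPathSupport 4 (G.induce s)
      ({⟨b2,mb2⟩, ⟨b1,mb1⟩, ⟨b,mb⟩, ⟨c,mc⟩} : Set s) :=
    pathSupport4 G s b2 b1 b c mb2 mb1 mb mc hb2.symm hb1.symm hbc
      (Ne.symm nbb2) (Ne.symm ncb2) (Ne.symm ncb1)
  have hP3 : IsPathSupport 4 (G.induce s)
      ({⟨a2,ma2⟩, ⟨a1,ma1⟩, ⟨a,ma⟩, ⟨b,mb⟩} : Set s) :=
    pathSupport4 G s a2 a1 a b ma2 ma1 ma mb ha2.symm ha1.symm hab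
      (Ne.symm naa2) (Ne.symm nba2) (Ne.symm nba1)
  have key := hmem s
  set T : Set ℕ := {n | ∃ M : Finset (Set ↑s), (∀ S ∈ M, IsPathSupport 4 (G.induce s) S) ∧
    (↑M : Set (Set ↑s)).Pairwise Disjoint ∧ M.card = n} with hT
  have h1mem : 1 ∈ T := by
    refine ⟨{({⟨a2,ma2⟩, ⟨a1,ma1⟩, ⟨a,ma⟩, ⟨c,mc⟩} : Set s)}, ?_, ?_, ?_⟩
    · intro S hS
      simp only [Finset.mem_singleton] at hS
      rw [hS]; exact hP1
    · simp
    · simp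
  have hscard : s.ncard = 7 := by
    have hse : s = ↑([a,b,c,a1,a2,b1,b2].toFinset) := by
      ext x; simp [hs]
    rw [hse, Set.ncard_coe_finset, List.toFinset_card_of_nodup hnd0]
    rfl
  have hub : ∀ n ∈ T, n ≤ 1 := by
    rintro n ⟨M, hM, hpw, rfl⟩
    by_contra hgt
    push_neg at hgt
    obtain ⟨S1', hS1, S2', hS2, hne⟩ := Finset.one_lt_card.mp hgt
    have d : Disjoint S1' S2' := hpw (Finset.mem_coe.mpr hS1) (Finset.mem_coe.mpr hS2) hne
    obtain ⟨f1, c1⟩ := pathSupport_ncard (hM _ hS1)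
    obtain ⟨f2, c2⟩ := pathSupport_ncard (hM _ hS2)
    have hcard : (S1' ∪ S2').ncard = 8 := by
      rw [Set.ncard_union_eq d f1 f2, c1, c2]
    have hle : (S1' ∪ S2').ncard ≤ (Set.univ : Set ↑s).ncard :=
      Set.ncard_le_ncard (Set.subset_univ _) Set.finite_univ
    rw [hcard, Set.ncard_univ, Nat.card_coe_set_eq, hscard] at hle
    omega
  have hnu : nuK 4 (G.induce s) = 1 := by
    apply le_antisymm
    · exact csSup_le ⟨1, h1mem⟩ hub
    · exact le_csSup ⟨1, fun n hn => hub n hn⟩ h1mem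
  rw [key] at hnu
  set T' : Set ℕ := {n | ∃ X : Finset ↑s, IsKVertexCover 4 (G.induce s) X ∧ X.card = n} with hT'
  have hne' : T'.Nonempty := by
    by_contra h
    rw [Set.not_nonempty_iff_eq_empty] at h
    have : tauK 4 (G.induce s) = 0 := by
      rw [tauK, ← hT', h, Nat.sInf_empty]
    omega
  have hmin : tauK 4 (G.induce s) ∈ T' := Nat.sInf_mem hne'
  rw [hnu] at hmin
  obtain ⟨X, hX, hXcard⟩ := hmin
  obtain ⟨x, hx⟩ := Finset.card_eq_one.mp hXcard
  have g1 := hX _ hP1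
  have g2 := hX _ hP2
  have g3 := hX _ hP3
  obtain ⟨y1, hy1X, hy1⟩ := g1
  obtain ⟨y2, hy2X, hy2⟩ := g2
  obtain ⟨y3, hy3X, hy3⟩ := g3
  rw [hx, Finset.mem_singleton] at hy1X hy2X hy3X
  subst hy1X; subst hy2X; subst hy3X
  simp only [Set.mem_insert_iff, Set.mem_singleton_iff, Subtype.ext_iff] at hy1 hy2 hy3
  rcases hy1 with h|h|h|h <;> rcases hy2 with g|g|g|g <;>
    first
      | exact absurd (h.symm.trans g) (by assumption)
      | exact absurd (g.symm.trans h) (by assumption)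
      | (rcases hy3 with f|f|f|f <;>
          first
            | exact absurd (h.symm.trans f) (by assumption)
            | exact absurd (f.symm.trans h) (by assumption))
end

section
/- If a graph G contains six distinct vertices a, b, c, d, c', d' such that ab, ac, bc, ad, bd, cc', dd' are all edges of G (i.e., G contains as a subgraph the graph K_4 minus the edge cd, with a pendant vertex attached to each of c and d), then G does not belong to 𝒢_4. -/
open SimpleGraph

lemma path4 {W : Type*} (H : SimpleGraph W) {w x y z : W}
    (h1 : H.Adj w x) (h2 : H.Adj x y) (h3 : H.Adj y z)
    (hwy : w ≠ y) (hwz : w ≠ z) (hxz : x ≠ z) :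
    IsPathSupport 4 H {t | t = w ∨ t = x ∨ t = y ∨ t = z} := by
  refine ⟨w, z, .cons h1 (.cons h2 (.cons h3 .nil)), ?_, by simp, ?_⟩
  · rw [SimpleGraph.Walk.isPath_def]
    simp [h1.ne, h2.ne, h3.ne, hwy, hwz, hxz]
  · ext v; simp

lemma ncard4 {W : Type*} {H : SimpleGraph W} {S : Set W} (h : IsPathSupport 4 H S) :
    S.ncard = 4 ∧ S.Finite := by
  classical
  obtain ⟨u, v, p, hp, hlen, rfl⟩ := h
  have he : {x | x ∈ p.support} = ↑p.support.toFinset := by simp [List.coe_toFinset]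
  rw [he]
  exact ⟨by rw [Set.ncard_coe_finset, List.toFinset_card_of_nodup hp.support_nodup, hlen],
    (p.support.toFinset : Set W).toFinite⟩

/-- If `G` contains `K₄` minus the edge `cd` on `{a,b,c,d}`, with a pendant vertex
attached to each of `c` and `d` (six distinct vertices in total), then `G ∉ 𝒢₄`. -/
theorem stmt14 {V : Type*} [Fintype V] (G : SimpleGraph V)
    (a b c d c' d' : V) (hnd : ([a, b, c, d, c', d'] : List V).Nodup)
    (hab : G.Adj a b) (hac : G.Adj a c) (hbc : G.Adj b c)
    (had : G.Adj a d) (hbd : G.Adj b d)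
    (hcc : G.Adj c c') (hdd : G.Adj d d') :
    ¬ memGclass 4 G := by
  classical
  simp only [List.nodup_cons, List.mem_cons, List.not_mem_nil, or_false, not_or,
    List.nodup_nil, and_true] at hnd
  obtain ⟨⟨nab, nac, nad, nac', nad'⟩, ⟨nbc, nbd, nbc', nbd'⟩, ⟨ncd, ncc', ncd'⟩,
    ⟨ndc', ndd'⟩, nc'd', -⟩ := hnd
  intro h
  set s : Set V := {a, b, c, d, c', d'} with hs
  have hmem := h s
  set H := G.induce s with hH
  haveI : Finite ↥s := (Set.toFinite s).to_subtype
  haveI : Fintype ↥s := Fintype.ofFinite ↥s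
  -- the six vertices as elements of the subtype
  have ma : a ∈ s := by simp [hs]
  have mb : b ∈ s := by simp [hs]
  have mc : c ∈ s := by simp [hs]
  have md : d ∈ s := by simp [hs]
  have mc' : c' ∈ s := by simp [hs]
  have md' : d' ∈ s := by simp [hs]
  set va : ↥s := ⟨a, ma⟩
  set vb : ↥s := ⟨b, mb⟩
  set vc : ↥s := ⟨c, mc⟩
  set vd : ↥s := ⟨d, md⟩
  set vc' : ↥s := ⟨c', mc'⟩
  set vd' : ↥s := ⟨d', md'⟩
  have sne : ∀ {u v : V} (hu : u ∈ s) (hv : v ∈ s), u ≠ v →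
      (⟨u, hu⟩ : ↥s) ≠ ⟨v, hv⟩ := fun _ _ huv he => huv (congrArg Subtype.val he)
  -- the four paths
  have hP1 : IsPathSupport 4 H {t | t = vc' ∨ t = vc ∨ t = va ∨ t = vd} :=
    path4 H (show G.Adj c' c from hcc.symm) (show G.Adj c a from hac.symm) had
      (sne mc' ma (Ne.symm nac')) (sne mc' md (Ne.symm ndc')) (sne mc md ncd)
  have hP2 : IsPathSupport 4 H {t | t = vc' ∨ t = vc ∨ t = vb ∨ t = vd} :=
    path4 H (show G.Adj c' c from hcc.symm) (show G.Adj c b from hbc.symm) hbd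
      (sne mc' mb (Ne.symm nbc')) (sne mc' md (Ne.symm ndc')) (sne mc md ncd)
  have hP3 : IsPathSupport 4 H {t | t = vd' ∨ t = vd ∨ t = va ∨ t = vb} :=
    path4 H (show G.Adj d' d from hdd.symm) (show G.Adj d a from had.symm) hab
      (sne md' ma (Ne.symm nad')) (sne md' mb (Ne.symm nbd')) (sne md mb (Ne.symm nbd))
  have hP4 : IsPathSupport 4 H {t | t = vc' ∨ t = vc ∨ t = va ∨ t = vb} :=
    path4 H (show G.Adj c' c from hcc.symm) (show G.Adj c a from hac.symm) hab
      (sne mc' ma (Ne.symm nac')) (sne mc' mb (Ne.symm nbc')) (sne mc mb (Ne.symm nbc))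
  -- ν₄(H) = 1
  have hub : ∀ n ∈ {n | ∃ M : Finset (Set ↥s), (∀ S ∈ M, IsPathSupport 4 H S) ∧
      (↑M : Set (Set ↥s)).Pairwise Disjoint ∧ M.card = n}, n ≤ 1 := by
    rintro n ⟨M, hM, hdisj, rfl⟩
    by_contra hn
    push_neg at hn
    obtain ⟨S₁, hS₁, S₂, hS₂, hSne⟩ := Finset.one_lt_card.mp hn
    have hd : Disjoint S₁ S₂ := hdisj (Finset.mem_coe.mpr hS₁) (Finset.mem_coe.mpr hS₂) hSne
    obtain ⟨hc₁, hf₁⟩ := ncard4 (hM S₁ hS₁)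
    obtain ⟨hc₂, hf₂⟩ := ncard4 (hM S₂ hS₂)
    have h8 : (S₁ ∪ S₂).ncard = 8 := by
      rw [Set.ncard_union_eq hd hf₁ hf₂, hc₁, hc₂]
    have hle : (S₁ ∪ S₂).ncard ≤ (Set.univ : Set ↥s).ncard :=
      Set.ncard_le_ncard (Set.subset_univ _) Set.finite_univ
    have huniv : (Set.univ : Set ↥s).ncard = s.ncard := by
      rw [Set.ncard_univ, Nat.card_coe_set_eq]
    have h6 : s.ncard ≤ 6 := by
      rw [hs]
      calc ({a, b, c, d, c', d'} : Set V).ncard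
          ≤ ({b, c, d, c', d'} : Set V).ncard + 1 := Set.ncard_insert_le _ _
        _ ≤ ({c, d, c', d'} : Set V).ncard + 1 + 1 :=
            Nat.add_le_add_right (Set.ncard_insert_le _ _) 1
        _ ≤ ({d, c', d'} : Set V).ncard + 1 + 1 + 1 :=
            Nat.add_le_add_right (Nat.add_le_add_right (Set.ncard_insert_le _ _) 1) 1
        _ ≤ ({c', d'} : Set V).ncard + 1 + 1 + 1 + 1 :=
            Nat.add_le_add_right (Nat.add_le_add_right (Nat.add_le_add_right (Set.ncard_insert_le _ _) 1) 1) 1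
        _ ≤ ({d'} : Set V).ncard + 1 + 1 + 1 + 1 + 1 :=
            Nat.add_le_add_right (Nat.add_le_add_right (Nat.add_le_add_right (Nat.add_le_add_right (Set.ncard_insert_le _ _) 1) 1) 1) 1
        _ ≤ 6 := by rw [Set.ncard_singleton]
    omega
  have h1mem : 1 ∈ {n | ∃ M : Finset (Set ↥s), (∀ S ∈ M, IsPathSupport 4 H S) ∧
      (↑M : Set (Set ↥s)).Pairwise Disjoint ∧ M.card = n} := by
    refine ⟨{({t | t = vc' ∨ t = vc ∨ t = va ∨ t = vd} : Set ↥s)}, ?_, ?_, rfl⟩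
    · intro S hS
      rw [Finset.mem_singleton] at hS
      subst hS
      exact hP1
    · rw [Finset.coe_singleton]
      exact Set.pairwise_singleton _ _
  have hnu : nuK 4 H = 1 :=
    le_antisymm (csSup_le ⟨1, h1mem⟩ hub) (le_csSup ⟨1, hub⟩ h1mem)
  -- τ₄(H) ∈ cover set, and equals 1
  have hTne : {n | ∃ X : Finset ↥s, IsKVertexCover 4 H X ∧ X.card = n}.Nonempty := by
    refine ⟨(Finset.univ : Finset ↥s).card, Finset.univ, ?_, rfl⟩
    rintro S ⟨u, v, p, _, _, rfl⟩
    exact ⟨u, Finset.mem_univ u, p.start_mem_support⟩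
  have htau : tauK 4 H ∈ {n | ∃ X : Finset ↥s, IsKVertexCover 4 H X ∧ X.card = n} :=
    Nat.sInf_mem hTne
  rw [← hmem, hnu] at htau
  obtain ⟨X, hX, hcard⟩ := htau
  obtain ⟨x, rfl⟩ := Finset.card_eq_one.mp hcard
  have hx : (x : V) = a ∨ (x : V) = b ∨ (x : V) = c ∨ (x : V) = d ∨
      (x : V) = c' ∨ (x : V) = d' := by
    have hx2 : (x : V) ∈ ({a, b, c, d, c', d'} : Set V) := hs ▸ x.2
    simp only [Set.mem_insert_iff, Set.mem_singleton_iff] at hx2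
    exact hx2
  -- helper: from a cover element in a path support, get the vertex identity
  have extract : ∀ {w1 w2 w3 w4 : ↥s},
      (∃ y ∈ ({x} : Finset ↥s), y ∈ ({t | t = w1 ∨ t = w2 ∨ t = w3 ∨ t = w4} : Set ↥s)) →
      (x : V) = ↑w1 ∨ (x : V) = ↑w2 ∨ (x : V) = ↑w3 ∨ (x : V) = ↑w4 := by
    rintro w1 w2 w3 w4 ⟨y, hy, hyS⟩
    rw [Finset.mem_singleton] at hy
    subst hy
    rcases hyS with e | e | e | e
    · exact Or.inl (congrArg Subtype.val e)
    · exact Or.inr (Or.inl (congrArg Subtype.val e))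
    · exact Or.inr (Or.inr (Or.inl (congrArg Subtype.val e)))
    · exact Or.inr (Or.inr (Or.inr (congrArg Subtype.val e)))
  rcases hx with hx | hx | hx | hx | hx | hx
  · rcases extract (hX _ hP2) with e | e | e | e <;> rw [hx] at e
    exacts [nac' e, nac e, nab e, nad e]
  · rcases extract (hX _ hP1) with e | e | e | e <;> rw [hx] at e
    exacts [nbc' e, nbc e, nab e.symm, nbd e]
  · rcases extract (hX _ hP3) with e | e | e | e <;> rw [hx] at e
    exacts [ncd' e, ncd e, nac e.symm, nbc e.symm]
  · rcases extract (hX _ hP4) with e | e | e | e <;> rw [hx] at e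
    exacts [ndc' e, ncd e.symm, nad e.symm, nbd e.symm]
  · rcases extract (hX _ hP3) with e | e | e | e <;> rw [hx] at e
    exacts [nc'd' e, ndc' e.symm, nac' e.symm, nbc' e.symm]
  · rcases extract (hX _ hP4) with e | e | e | e <;> rw [hx] at e
    exacts [nc'd' e.symm, ncd' e.symm, nad' e.symm, nbd' e.symm]
end
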